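/- The map f̌_a restricted to ℝ × (0, c_a) is injective: if f̌_a(α,β) = f̌_a(α',β') with β, β' ∈ (0, c_a), then α = α' and β = β'. -/

import Mathlib

/-!
Since the first coordinate of `γ̃_a` is the height, `f̌_a(α, β)` has height `α`, so only `β < β'`
at equal `α` has to be excluded. Put `p < q < r < s` for the parameters of `γ_a` at heights
`α - β', α - β, α + β, α + β'`. Equality of the midpoints says that the two arcs `[p, q]` and
`[r, s]` of `γ_a` have equal displacement, i.e. equal `ξ_a`-mass and equal first moments
`∫ ξ_a cos`, `∫ ξ_a sin`. As `β' < c_a` and `τ_a(t + π) = τ_a(t) + c_a`, the arcs fit in a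
window `s < p + 2π`, so some direction `θ` separates them: `cos (t - θ) > cos A` on `[r, s]` and
`cos (t - θ) < cos A` on `[p, q]`. Integrating `ξ_a (cos (t - θ) - cos A)` over both arcs then
gives a positive and a negative number which the moment equalities force to coincide.
-/

open Real

noncomputable def xi (a t : ℝ) : ℝ :=
  2 / Real.sqrt (2 * Real.cos (4 * t) + (a ^ 4 + (a ^ 4)⁻¹))

noncomputable def tau (a s : ℝ) : ℝ := ∫ t in (0:ℝ)..s, xi a t

noncomputable def gam (a : ℝ) (s : ℝ) : ℝ × ℝ × ℝ :=
  (tau a s,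
   ∫ t in (0:ℝ)..s, -(xi a t * Real.cos t),
   ∫ t in (0:ℝ)..s, -(xi a t * Real.sin t))

noncomputable def gamTilde (a : ℝ) (x : ℝ) : ℝ × ℝ × ℝ :=
  gam a (Function.invFun (tau a) x)

noncomputable def fcheck (a : ℝ) (α β : ℝ) : ℝ × ℝ × ℝ :=
  (1/2 : ℝ) • (gamTilde a (α + β) + gamTilde a (α - β))

open MeasureTheory intervalIntegral Function

section SeparatedArcs

lemma cos_lt_cos_of_abs_lt {x A : ℝ} (hA : A ≤ π) (hx : |x| < A) : cos A < cos x := by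
  rw [← cos_abs x]
  exact cos_lt_cos_of_nonneg_of_le_pi (abs_nonneg x) hA hx

lemma cos_lt_cos_of_lt_of_lt_two_pi_sub {x A : ℝ} (hA : 0 ≤ A) (h₁ : A < x)
    (h₂ : x < 2 * π - A) : cos x < cos A := by
  rcases le_or_gt x π with hx | hx
  · exact cos_lt_cos_of_nonneg_of_le_pi hA hx h₁
  · rw [← cos_two_pi_sub x]
    exact cos_lt_cos_of_nonneg_of_le_pi hA (by linarith) (by linarith)

variable {w : ℝ → ℝ}

lemma integral_mul_cos_sub_sub_cos (hw : Continuous w) (θ A u v : ℝ) :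
    ∫ t in u..v, w t * (cos (t - θ) - cos A) =
      cos θ * (∫ t in u..v, w t * cos t) + sin θ * (∫ t in u..v, w t * sin t) -
        cos A * ∫ t in u..v, w t := by
  have hi : ∀ f : ℝ → ℝ, Continuous f → IntervalIntegrable f volume u v :=
    fun f hf => hf.intervalIntegrable u v
  simp only [← intervalIntegral.integral_const_mul]
  rw [← integral_add (hi _ (by fun_prop)) (hi _ (by fun_prop)),
    ← integral_sub (hi _ (by fun_prop)) (hi _ (by fun_prop))]
  congr 1
  ext t
  rw [cos_sub]
  ring

theorem integral_mul_sin_ne_of_separated_arcs (hw : Continuous w) (hpos : ∀ t, 0 < w t)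
    {p q r s : ℝ} (hpq : p < q) (hqr : q ≤ r) (hrs : r < s) (hsp : s < p + 2 * π)
    (hmass : ∫ t in p..q, w t = ∫ t in r..s, w t)
    (hcos : ∫ t in p..q, w t * cos t = ∫ t in r..s, w t * cos t) :
    ∫ t in p..q, w t * sin t ≠ ∫ t in r..s, w t * sin t := by
  intro hsin
  -- `[r, s] ⊆ [θ - A, θ + A]` and `[p, q] ⊆ [θ + A - 2π, θ - A]`.
  set θ := ((q + r) / 2 + (s + p) / 2 + π) / 2 with hθ
  set A := ((s + p) / 2 + π - (q + r) / 2) / 2 with hA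
  have hθA₁ : θ - A = (q + r) / 2 := by rw [hθ, hA]; ring
  have hθA₂ : θ + A = (s + p) / 2 + π := by rw [hθ, hA]; ring
  have hcont : Continuous fun t => w t * (cos (t - θ) - cos A) := by fun_prop
  have hrs_pos : 0 < ∫ t in r..s, w t * (cos (t - θ) - cos A) := by
    refine intervalIntegral_pos_of_pos_on (hcont.intervalIntegrable r s) (fun t ht => ?_) hrs
    refine mul_pos (hpos t) (sub_pos.2 (cos_lt_cos_of_abs_lt (by linarith) ?_))
    exact abs_lt.2 ⟨by linarith [ht.1], by linarith [ht.2]⟩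
  have hpq_neg : 0 < -∫ t in p..q, w t * (cos (t - θ) - cos A) := by
    rw [← intervalIntegral.integral_neg]
    refine intervalIntegral_pos_of_pos_on (hcont.neg.intervalIntegrable p q) (fun t ht => ?_) hpq
    refine neg_pos.2 (mul_neg_of_pos_of_neg (hpos t) (sub_neg.2 ?_))
    rw [← cos_neg, neg_sub]
    exact cos_lt_cos_of_lt_of_lt_two_pi_sub (by linarith) (by linarith [ht.2])
      (by linarith [ht.1])
  rw [integral_mul_cos_sub_sub_cos hw] at hrs_pos hpq_neg
  rw [hmass, hcos, hsin] at hpq_neg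
  linarith

end SeparatedArcs

section Xi

variable {a : ℝ}

lemma two_lt_pow_four_add_inv (ha : a ∈ Set.Ioo (0 : ℝ) 1) : 2 < a ^ 4 + (a ^ 4)⁻¹ := by
  have hx₀ : 0 < a ^ 4 := pow_pos ha.1 4
  have hx₁ : a ^ 4 < 1 := pow_lt_one₀ ha.1.le ha.2 (by norm_num)
  have hinv : a ^ 4 * (a ^ 4)⁻¹ = 1 := mul_inv_cancel₀ hx₀.ne'
  nlinarith [mul_pos hx₀ (inv_pos.2 hx₀), sq_pos_of_pos (sub_pos.2 hx₁)]

lemma xi_radicand_pos (ha : a ∈ Set.Ioo (0 : ℝ) 1) (t : ℝ) :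
    0 < 2 * cos (4 * t) + (a ^ 4 + (a ^ 4)⁻¹) := by
  linarith [neg_one_le_cos (4 * t), two_lt_pow_four_add_inv ha]

lemma xi_pos (ha : a ∈ Set.Ioo (0 : ℝ) 1) (t : ℝ) : 0 < xi a t :=
  div_pos two_pos (sqrt_pos.2 (xi_radicand_pos ha t))

lemma continuous_xi (ha : a ∈ Set.Ioo (0 : ℝ) 1) : Continuous (xi a) :=
  continuous_const.div (by fun_prop) fun t => (sqrt_pos.2 (xi_radicand_pos ha t)).ne'

lemma xi_periodic : Periodic (xi a) π := by
  intro t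
  have h : 4 * (t + π) = 4 * t + 2 * π + 2 * π := by ring
  simp only [xi, h, cos_add_two_pi]

lemma tau_strictMono (ha : a ∈ Set.Ioo (0 : ℝ) 1) : StrictMono (tau a) := by
  intro u v huv
  have hi := (continuous_xi ha).intervalIntegrable (μ := volume)
  rw [← sub_pos, tau, tau, integral_interval_sub_left (hi 0 v) (hi 0 u)]
  exact intervalIntegral_pos_of_pos (hi u v) (xi_pos ha) huv

lemma tau_add_pi (ha : a ∈ Set.Ioo (0 : ℝ) 1) (s : ℝ) : tau a (s + π) = tau a s + tau a π := by
  simpa only [tau, zero_add] using xi_periodic.intervalIntegral_add_eq_add 0 s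
    fun _ _ => (continuous_xi ha).intervalIntegrable _ _

lemma tau_surjective (ha : a ∈ Set.Ioo (0 : ℝ) 1) : Surjective (tau a) := by
  have hi := (continuous_xi ha).intervalIntegrable (μ := volume) 0 π
  exact (continuous_primitive (continuous_xi ha).intervalIntegrable 0).surjective
    (xi_periodic.tendsto_atTop_intervalIntegral_of_pos' hi (xi_pos ha) pi_pos)
    (xi_periodic.tendsto_atBot_intervalIntegral_of_pos' hi (xi_pos ha) pi_pos)

lemma tau_invFun (ha : a ∈ Set.Ioo (0 : ℝ) 1) (x : ℝ) : tau a (invFun (tau a) x) = x :=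
  rightInverse_invFun (tau_surjective ha) x

lemma invFun_tau_strictMono (ha : a ∈ Set.Ioo (0 : ℝ) 1) : StrictMono (invFun (tau a)) := by
  intro x y hxy
  rwa [← (tau_strictMono ha).lt_iff_lt, tau_invFun ha, tau_invFun ha]

lemma gam_sub_gam (ha : a ∈ Set.Ioo (0 : ℝ) 1) (u v : ℝ) :
    gam a v - gam a u =
      (∫ t in u..v, xi a t, ∫ t in u..v, -(xi a t * cos t), ∫ t in u..v, -(xi a t * sin t)) := by
  have hsub : ∀ f : ℝ → ℝ, Continuous f →
      (∫ t in (0 : ℝ)..v, f t) - ∫ t in (0 : ℝ)..u, f t = ∫ t in u..v, f t :=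
    fun f hf => integral_interval_sub_left (hf.intervalIntegrable 0 v) (hf.intervalIntegrable 0 u)
  have hxi := continuous_xi ha
  simp only [gam, tau, Prod.mk_sub_mk]
  rw [hsub _ hxi, hsub (fun t => -(xi a t * cos t)) (hxi.mul continuous_cos).neg,
    hsub (fun t => -(xi a t * sin t)) (hxi.mul continuous_sin).neg]

lemma fcheck_fst (ha : a ∈ Set.Ioo (0 : ℝ) 1) (α β : ℝ) : (fcheck a α β).1 = α := by
  simp only [fcheck, gamTilde, gam, Prod.smul_fst, Prod.fst_add, smul_eq_mul, tau_invFun ha]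
  ring

lemma fcheck_ne_of_lt (ha : a ∈ Set.Ioo (0 : ℝ) 1) {α β β' : ℝ} (hβ : 0 < β) (hββ' : β < β')
    (hβ' : β' < tau a π) : fcheck a α β ≠ fcheck a α β' := by
  intro h
  set σ := invFun (tau a)
  have hσ := invFun_tau_strictMono ha
  have hwindow : σ (α + β') < σ (α - β') + 2 * π := by
    rw [← (tau_strictMono ha).lt_iff_lt, two_mul, ← add_assoc, tau_add_pi ha, tau_add_pi ha,
      tau_invFun ha, tau_invFun ha]
    linarith
  have hsum := smul_right_injective (ℝ × ℝ × ℝ) (by norm_num : (1 / 2 : ℝ) ≠ 0) h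
  have hchord : gam a (σ (α - β)) - gam a (σ (α - β')) =
      gam a (σ (α + β')) - gam a (σ (α + β)) :=
    sub_eq_sub_iff_add_eq_add.2 (by simpa only [gamTilde, add_comm] using hsum)
  simp only [gam_sub_gam ha, Prod.mk.injEq, intervalIntegral.integral_neg, neg_inj] at hchord
  obtain ⟨hmass, hcos, hsin⟩ := hchord
  exact integral_mul_sin_ne_of_separated_arcs (continuous_xi ha) (xi_pos ha)
    (hσ (by linarith)) (hσ (by linarith)).le (hσ (by linarith)) hwindow hmass hcos hsin

end Xi

theorem statement17 (a : ℝ) (ha : a ∈ Set.Ioo (0:ℝ) 1) (α α' β β' : ℝ)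
    (hβ : β ∈ Set.Ioo 0 (tau a π)) (hβ' : β' ∈ Set.Ioo 0 (tau a π))
    (heq : fcheck a α β = fcheck a α' β') :
    α = α' ∧ β = β' := by
  obtain rfl : α = α' := by
    simpa only [fcheck_fst ha] using congrArg Prod.fst heq
  refine ⟨rfl, ?_⟩
  rcases lt_trichotomy β β' with h | h | h
  · exact absurd heq (fcheck_ne_of_lt ha hβ.1 h hβ'.2)
  · exact h
  · exact absurd heq.symm (fcheck_ne_of_lt ha hβ'.1 h hβ.2)
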